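/- arXiv:1809.07044 — 3 statements merged into one kernel-verified Lean document; each statement's English description precedes it below -/
import Mathlib

section
/- Let τ : ℝ → ℝ be any function and, for ρ > 0, let W_ρ = {x ∈ ℝ² : ∀ θ ∈ ℝ, x • (cos θ, sin θ) ≤ ρ·τ(θ)}. If ρ₁, ρ₂ > 0 and x₁, x₂ ∈ ℝ² are such that the translates x₁ + W_{ρ₁} and x₂ + W_{ρ₂} have a non-empty intersection, then there exists x₀ ∈ ℝ² such that (x₁ + W_{ρ₁}) ∪ (x₂ + W_{ρ₂}) ⊆ x₀ + W_{ρ₁+ρ₂}. -/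
open Real Set
open scoped Pointwise

/-- The Wulff shape associated with the surface tension `τ` and the size parameter `ρ`:
the set of points of the plane whose inner product with `(cos θ, sin θ)` is at most
`ρ * τ θ` for every direction `θ`. -/
def wulff (τ : ℝ → ℝ) (ρ : ℝ) : Set (ℝ × ℝ) :=
  {x : ℝ × ℝ | ∀ θ : ℝ, x.1 * Real.cos θ + x.2 * Real.sin θ ≤ ρ * τ θ}

/-!
If `y` lies in both translates, then `x₁ + a = (x₁ + x₂ - y) + (a + (y - x₂))` with
`y - x₂ ∈ W_{ρ₂}`, and symmetrically for the second translate; so both translates lie in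
`(x₁ + x₂ - y) + (W_{ρ₁} + W_{ρ₂})`. The Minkowski sum `W_{ρ₁} + W_{ρ₂}` is contained in
`W_{ρ₁ + ρ₂}` because the defining inequalities are linear in the point and add up.
-/

theorem add_mem_wulff {τ : ℝ → ℝ} {ρ₁ ρ₂ : ℝ} {a b : ℝ × ℝ} (ha : a ∈ wulff τ ρ₁)
    (hb : b ∈ wulff τ ρ₂) : a + b ∈ wulff τ (ρ₁ + ρ₂) := fun θ => by
  have := add_le_add (ha θ) (hb θ)
  simp only [Prod.fst_add, Prod.snd_add]
  linarith

theorem wulff_add_subset (τ : ℝ → ℝ) (ρ₁ ρ₂ : ℝ) :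
    wulff τ ρ₁ + wulff τ ρ₂ ⊆ wulff τ (ρ₁ + ρ₂) :=
  add_subset_iff.2 fun _ ha _ hb => add_mem_wulff ha hb

section AddCommGroup

variable {G : Type*} [AddCommGroup G] {s t : Set G} {x₁ x₂ : G}

theorem vadd_set_subset_vadd_set_add_of_mem {y : G} (hy : y ∈ x₂ +ᵥ t) :
    x₁ +ᵥ s ⊆ (x₁ + x₂ - y) +ᵥ (s + t) := by
  rintro _ ⟨a, ha, rfl⟩
  obtain ⟨b, hb, rfl⟩ := hy
  exact ⟨a + b, add_mem_add ha hb, by simp only [vadd_eq_add]; abel⟩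

theorem exists_union_vadd_set_subset_vadd_set_add
    (h : ((x₁ +ᵥ s) ∩ (x₂ +ᵥ t)).Nonempty) :
    ∃ x₀ : G, (x₁ +ᵥ s) ∪ (x₂ +ᵥ t) ⊆ x₀ +ᵥ (s + t) := by
  obtain ⟨y, hy₁, hy₂⟩ := h
  refine ⟨x₁ + x₂ - y, union_subset (vadd_set_subset_vadd_set_add_of_mem hy₂) ?_⟩
  simpa only [add_comm x₂ x₁, add_comm t s] using
    vadd_set_subset_vadd_set_add_of_mem (s := t) (x₁ := x₂) hy₁

end AddCommGroup

theorem wulff_union_subset_translate_general (τ : ℝ → ℝ) (ρ₁ ρ₂ : ℝ)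
    (x₁ x₂ : ℝ × ℝ)
    (h : ((x₁ +ᵥ wulff τ ρ₁) ∩ (x₂ +ᵥ wulff τ ρ₂)).Nonempty) :
    ∃ x₀ : ℝ × ℝ, (x₁ +ᵥ wulff τ ρ₁) ∪ (x₂ +ᵥ wulff τ ρ₂) ⊆ x₀ +ᵥ wulff τ (ρ₁ + ρ₂) := by
  obtain ⟨x₀, hx₀⟩ := exists_union_vadd_set_subset_vadd_set_add h
  exact ⟨x₀, hx₀.trans (vadd_set_mono (wulff_add_subset τ ρ₁ ρ₂))⟩

/-- Two intersecting translates of Wulff shapes of sizes `ρ₁` and `ρ₂` are jointly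
contained in a single translate of the Wulff shape of size `ρ₁ + ρ₂`. -/
theorem wulff_union_subset_translate (τ : ℝ → ℝ) (ρ₁ ρ₂ : ℝ) (hρ₁ : 0 < ρ₁) (hρ₂ : 0 < ρ₂)
    (x₁ x₂ : ℝ × ℝ)
    (h : ((x₁ +ᵥ wulff τ ρ₁) ∩ (x₂ +ᵥ wulff τ ρ₂)).Nonempty) :
    ∃ x₀ : ℝ × ℝ, (x₁ +ᵥ wulff τ ρ₁) ∪ (x₂ +ᵥ wulff τ ρ₂) ⊆ x₀ +ᵥ wulff τ (ρ₁ + ρ₂) :=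
  wulff_union_subset_translate_general τ ρ₁ ρ₂ x₁ x₂ h
end

section
/- Let τ : ℝ → ℝ be continuous, positive and π-periodic, and for ρ > 0 let W_ρ = {x ∈ ℝ² : ∀ θ ∈ ℝ, x • (cos θ, sin θ) ≤ ρ·τ(θ)}. Then for all ρ₁ > 0 and ρ₀ > 0, the union of W_{ρ₁} with all the translates x + W_{ρ₀} over points x in the topological frontier of W_{ρ₁+ρ₀} equals W_{ρ₁+2ρ₀}; i.e. W_{ρ₁} ∪ ⋃_{x ∈ frontier(W_{ρ₁+ρ₀})} (x + W_{ρ₀}) = W_{ρ₁+2ρ₀}. -/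
open Real Set
open scoped Pointwise

/-!
Let `m` be the least `r` with `z ∈ W_r`. For `z ∈ W_{ρ₁+2ρ₀} \ W_{ρ₁}` we have
`ρ₁ < m ≤ ρ₁ + 2ρ₀`, and the rescaled point `x = ((ρ₁ + ρ₀) / m) • z` lies on `∂W_{ρ₁+ρ₀}`,
since it is in `W_{ρ₁+ρ₀}` while no `t • x` with `t > 1` is. By the central symmetry of the
Wulff shapes, `z - x = (1 - (ρ₁ + ρ₀) / m) • z` lies in `W_{|m - (ρ₁ + ρ₀)|} ⊆ W_{ρ₀}`.
The other inclusion is `W_a + W_b ⊆ W_{a+b}`.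
-/

open Filter Topology

lemma wulff_isClosed (τ : ℝ → ℝ) (ρ : ℝ) : IsClosed (wulff τ ρ) := by
  have : wulff τ ρ = ⋂ θ : ℝ, {x : ℝ × ℝ | x.1 * cos θ + x.2 * sin θ ≤ ρ * τ θ} := by
    ext x; simp [wulff]
  rw [this]
  exact isClosed_iInter fun θ => isClosed_le (by fun_prop) continuous_const

lemma mem_frontier_of_forall_one_lt_smul_notMem {E : Type*} [TopologicalSpace E]
    [AddCommGroup E] [Module ℝ E] [ContinuousSMul ℝ E] {s : Set E} {x : E} (hx : x ∈ s)
    (h : ∀ t : ℝ, 1 < t → t • x ∉ s) : x ∈ frontier s := by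
  refine ⟨subset_closure hx, fun hint => ?_⟩
  have hcont : Continuous fun t : ℝ => t • x := continuous_id.smul continuous_const
  have hlim : Tendsto (fun t : ℝ => t • x) (𝓝[>] 1) (𝓝 x) := by
    simpa only [one_smul] using (hcont.tendsto 1).mono_left nhdsWithin_le_nhds
  obtain ⟨t, hts, ht⟩ :=
    ((hlim.eventually (isOpen_interior.mem_nhds hint)).and self_mem_nhdsWithin).exists
  exact h t ht (interior_subset hts)

section

variable {τ : ℝ → ℝ}

lemma wulff_mono (hτ : ∀ θ, 0 ≤ τ θ) {a b : ℝ} (hab : a ≤ b) : wulff τ a ⊆ wulff τ b :=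
  fun _ hz θ => (hz θ).trans (mul_le_mul_of_nonneg_right hab (hτ θ))

lemma add_mem_wulff_s1 {x y : ℝ × ℝ} {a b : ℝ} (hx : x ∈ wulff τ a) (hy : y ∈ wulff τ b) :
    x + y ∈ wulff τ (a + b) := fun θ => by
  have := add_le_add (hx θ) (hy θ)
  simp only [Prod.fst_add, Prod.snd_add]
  linarith

lemma smul_mem_wulff {z : ℝ × ℝ} {c ρ : ℝ} (hc : 0 ≤ c) (hz : z ∈ wulff τ ρ) :
    c • z ∈ wulff τ (c * ρ) := fun θ => by
  have := mul_le_mul_of_nonneg_left (hz θ) hc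
  simp only [Prod.smul_fst, Prod.smul_snd, smul_eq_mul]
  linarith

lemma smul_mem_wulff_iff {z : ℝ × ℝ} {c ρ : ℝ} (hc : 0 < c) :
    c • z ∈ wulff τ ρ ↔ z ∈ wulff τ (ρ / c) := by
  refine forall_congr' fun θ => ?_
  simp only [Prod.smul_fst, Prod.smul_snd, smul_eq_mul]
  rw [div_mul_eq_mul_div, le_div_iff₀ hc]
  constructor <;> intro h <;> linarith

lemma neg_mem_wulff (hper : ∀ θ, τ (θ + π) = τ θ) {z : ℝ × ℝ} {ρ : ℝ} (hz : z ∈ wulff τ ρ) :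
    -z ∈ wulff τ ρ := fun θ => by
  have := hz (θ + π)
  rw [cos_add_pi, sin_add_pi, hper] at this
  simp only [Prod.fst_neg, Prod.snd_neg]
  linarith

lemma smul_mem_wulff_abs (hper : ∀ θ, τ (θ + π) = τ θ) {z : ℝ × ℝ} {ρ : ℝ}
    (hz : z ∈ wulff τ ρ) (s : ℝ) : s • z ∈ wulff τ (|s| * ρ) := by
  rcases le_total 0 s with hs | hs
  · simpa [abs_of_nonneg hs] using smul_mem_wulff hs hz
  · simpa [abs_of_nonpos hs] using smul_mem_wulff (neg_nonneg.2 hs) (neg_mem_wulff hper hz)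

/-- The least size of a Wulff shape containing `z`: `sup_θ (z ⬝ e_θ) / τ θ`. -/
lemma exists_forall_mem_wulff_iff_le (hpos : ∀ θ, 0 < τ θ) {z : ℝ × ℝ} {R : ℝ}
    (hz : z ∈ wulff τ R) : ∃ m, ∀ r, z ∈ wulff τ r ↔ m ≤ r := by
  set f : ℝ → ℝ := fun θ => (z.1 * cos θ + z.2 * sin θ) / τ θ
  have hmem : ∀ r, z ∈ wulff τ r ↔ ∀ θ, f θ ≤ r := fun r =>
    forall_congr' fun θ => (div_le_iff₀ (hpos θ)).symm
  have hbdd : BddAbove (range f) := ⟨R, forall_mem_range.2 ((hmem R).1 hz)⟩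
  exact ⟨⨆ θ, f θ, fun r => (hmem r).trans (ciSup_le_iff hbdd).symm⟩

lemma smul_mem_frontier_wulff {z : ℝ × ℝ} {m ρ : ℝ}
    (hm : ∀ r, z ∈ wulff τ r ↔ m ≤ r) (hm₀ : 0 < m) (hρ : 0 < ρ) :
    (ρ / m) • z ∈ frontier (wulff τ ρ) := by
  have hc : 0 < ρ / m := div_pos hρ hm₀
  refine mem_frontier_of_forall_one_lt_smul_notMem ?_ fun t ht hmem => ?_
  · rw [smul_mem_wulff_iff hc, div_div_cancel₀ hρ.ne']
    exact (hm m).2 le_rfl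
  · rw [smul_smul, smul_mem_wulff_iff (by positivity), hm, mul_comm, ← div_div,
      div_div_cancel₀ hρ.ne'] at hmem
    exact (div_lt_self hm₀ ht).not_ge hmem

end

theorem wulff_union_tangent_translates_general (τ : ℝ → ℝ)
    (hpos : ∀ θ : ℝ, 0 < τ θ) (hper : ∀ θ : ℝ, τ (θ + Real.pi) = τ θ)
    (ρ₁ ρ₀ : ℝ) (hρ₁ : 0 < ρ₁) (hρ₀ : 0 < ρ₀) :
    wulff τ ρ₁ ∪ ⋃ x ∈ frontier (wulff τ (ρ₁ + ρ₀)), (x +ᵥ wulff τ ρ₀)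
      = wulff τ (ρ₁ + 2 * ρ₀) := by
  have hτ : ∀ θ, 0 ≤ τ θ := fun θ => (hpos θ).le
  refine Subset.antisymm (union_subset (wulff_mono hτ (by linarith)) ?_) fun z hz => ?_
  · simp only [iUnion_subset_iff, vadd_set_subset_iff]
    intro x hx y hy
    simpa [two_mul, add_assoc] using add_mem_wulff_s1 ((wulff_isClosed _ _).frontier_subset hx) hy
  by_cases hz₁ : z ∈ wulff τ ρ₁
  · exact Or.inl hz₁
  obtain ⟨m, hm⟩ := exists_forall_mem_wulff_iff_le hpos hz
  have hm₁ : ρ₁ < m := not_le.1 fun h => hz₁ ((hm ρ₁).2 h)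
  have hmR : m ≤ ρ₁ + 2 * ρ₀ := (hm _).1 hz
  have hm₀ : 0 < m := hρ₁.trans hm₁
  set c := (ρ₁ + ρ₀) / m
  refine Or.inr (mem_iUnion₂.2 ⟨c • z, smul_mem_frontier_wulff hm hm₀ (by linarith), ?_⟩)
  refine ⟨(1 - c) • z, ?_, by simp [sub_smul]⟩
  refine wulff_mono hτ ?_ (smul_mem_wulff_abs hper ((hm m).2 le_rfl) _)
  calc |1 - c| * m = |(1 - c) * m| := by rw [abs_mul, abs_of_pos hm₀]
    _ = |m - (ρ₁ + ρ₀)| := by rw [sub_mul, one_mul, div_mul_cancel₀ _ hm₀.ne']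
    _ ≤ ρ₀ := abs_le.2 ⟨by linarith, by linarith⟩

/-- The union of the Wulff shape `W_{ρ₁}` with all the externally tangent Wulff shapes
`x + W_{ρ₀}`, `x ∈ ∂W_{ρ₁+ρ₀}`, is the Wulff shape `W_{ρ₁+2ρ₀}`. -/
theorem wulff_union_tangent_translates (τ : ℝ → ℝ) (hcont : Continuous τ)
    (hpos : ∀ θ : ℝ, 0 < τ θ) (hper : ∀ θ : ℝ, τ (θ + Real.pi) = τ θ)
    (ρ₁ ρ₀ : ℝ) (hρ₁ : 0 < ρ₁) (hρ₀ : 0 < ρ₀) :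
    wulff τ ρ₁ ∪ ⋃ x ∈ frontier (wulff τ (ρ₁ + ρ₀)), (x +ᵥ wulff τ ρ₀)
      = wulff τ (ρ₁ + 2 * ρ₀) :=
  wulff_union_tangent_translates_general τ hpos hper ρ₁ ρ₀ hρ₁ hρ₀
end

section
/- Let τ : ℝ → ℝ be continuous, positive and π-periodic, and suppose τ satisfies the triangle inequality: for all x, y, z ∈ ℝ² forming a nondegenerate triangle, if n_z = (cos θ_z, sin θ_z), n_x = (cos θ_x, sin θ_x) and n_y = (cos θ_y, sin θ_y) denote the outward unit normals of the triangle xyz to the sides [x,y], [y,z] and [z,x] respectively, then ‖x−z‖·τ(θ_y) ≤ ‖x−y‖·τ(θ_z) + ‖y−z‖·τ(θ_x) (with ‖·‖ the Euclidean norm). Then for every ρ > 0 and every θ ∈ ℝ, the maximum of x • (cos θ, sin θ) over x ∈ W_ρ equals ρ·τ(θ); that is, ρτ is the support function of the Wulff shape W_ρ. -/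
open Real Set

/-- The Euclidean norm on the plane `ℝ × ℝ`. -/
noncomputable def enorm2 (v : ℝ × ℝ) : ℝ := Real.sqrt (v.1 ^ 2 + v.2 ^ 2)

/-!
Extend `τ` positively homogeneously to `h(v) = ‖v‖ τ(arg v)` on the plane. For `u, v` with
positive cross product, the triangle inequality applied to the triangle whose sides are `u`, `v`,
`u + v` rotated by a right angle gives `h(u + v) ≤ h(u) + h(v)`; for parallel `u, v` this follows
from `h(t v) = |t| h(v)`, a consequence of `π`-periodicity. So `ρ h` is sublinear, and by Hahn–Banach the functional
`t (cos θ, sin θ) ↦ t ρ τ(θ)` extends to a linear form `g ≤ ρ h`. The vector representing `g`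
lies in `W_ρ` because `g (cos θ', sin θ') ≤ ρ τ(θ')`, and it attains `ρ τ(θ)` in direction `θ`.
-/

open Function

section Sublinear

variable {E : Type*} [AddCommGroup E] [Module ℝ E]

lemma exists_linearMap_le_eq_of_sublinear (N : E → ℝ)
    (N_hom : ∀ c : ℝ, 0 < c → ∀ x, N (c • x) = c * N x)
    (N_add : ∀ x y, N (x + y) ≤ N x + N y) (v : E) :
    ∃ g : E →ₗ[ℝ] ℝ, (∀ x, g x ≤ N x) ∧ g v = N v := by
  have N_zero : N 0 = 0 := by
    have := N_hom 2 two_pos 0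
    rw [smul_zero] at this
    linarith
  have mul_le : ∀ c : ℝ, c * N v ≤ N (c • v) := by
    intro c
    rcases lt_trichotomy c 0 with hc | rfl | hc
    · have := N_add (c • v) ((-c) • v)
      rw [← add_smul, add_neg_cancel, zero_smul, N_zero, N_hom (-c) (neg_pos.2 hc)] at this
      linarith
    · simp [N_zero]
    · exact (N_hom c hc v).ge
  let f : E →ₗ.[ℝ] ℝ := LinearPMap.mkSpanSingleton' v (N v) fun c hc => by
    have h₁ := mul_le c
    have h₂ := mul_le (-c)
    rw [hc, N_zero] at h₁
    rw [neg_smul, hc, neg_zero, N_zero] at h₂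
    simp only [RingHom.id_apply, smul_eq_mul]
    linarith
  obtain ⟨g, hgf, hgN⟩ := exists_extension_of_le_sublinear f N N_hom N_add <| by
    rintro ⟨x, hx⟩
    obtain ⟨c, rfl⟩ := Submodule.mem_span_singleton.1 hx
    rw [LinearPMap.mkSpanSingleton'_apply]
    exact mul_le c
  exact ⟨g, hgN, (hgf ⟨v, Submodule.mem_span_singleton_self v⟩).trans
    (LinearPMap.mkSpanSingleton'_apply_self _ _ _ _)⟩

end Sublinear

lemma LinearMap.prod_apply_eq (g : ℝ × ℝ →ₗ[ℝ] ℝ) (u : ℝ × ℝ) :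
    g (1, 0) * u.1 + g (0, 1) * u.2 = g u := by
  conv_rhs => rw [show u = u.1 • ((1 : ℝ), (0 : ℝ)) + u.2 • ((0 : ℝ), (1 : ℝ)) by ext <;> simp]
  rw [map_add, map_smul, map_smul, smul_eq_mul, smul_eq_mul, mul_comm, mul_comm u.2]

lemma Function.Periodic.eq_of_cos_eq_of_sin_eq {α : Type*} {f : ℝ → α}
    (hf : Periodic f (2 * π)) {a b : ℝ} (hcos : cos a = cos b) (hsin : sin a = sin b) :
    f a = f b := by
  obtain ⟨k, hk⟩ := Real.Angle.angle_eq_iff_two_pi_dvd_sub.1 (Real.Angle.cos_sin_inj hcos hsin)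
  rw [show a = b + k * (2 * π) by linarith]
  exact hf.int_mul k b

lemma Function.Periodic.eq_of_cos_eq_neg_of_sin_eq_neg {α : Type*} {f : ℝ → α}
    (hf : Periodic f π) {a b : ℝ} (hcos : cos a = -cos b) (hsin : sin a = -sin b) :
    f a = f b :=
  ((two_mul π ▸ hf.add_period hf).eq_of_cos_eq_of_sin_eq (b := b + π)
    (by rw [cos_add_pi, hcos]) (by rw [sin_add_pi, hsin])).trans (hf b)

lemma norm_mk_eq_enorm2 (v : ℝ × ℝ) : ‖(⟨v.1, v.2⟩ : ℂ)‖ = enorm2 v := by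
  rw [Complex.norm_def, Complex.normSq_apply, enorm2]
  ring_nf

lemma enorm2_pos {v : ℝ × ℝ} (hv : v ≠ 0) : 0 < enorm2 v := by
  rw [← norm_mk_eq_enorm2, norm_pos_iff]
  exact fun h => hv (Prod.ext (congrArg Complex.re h) (congrArg Complex.im h))

lemma enorm2_smul (t : ℝ) (v : ℝ × ℝ) : enorm2 (t • v) = |t| * enorm2 v := by
  rw [enorm2, enorm2, ← sqrt_sq_eq_abs, ← sqrt_mul (sq_nonneg t)]
  simp only [Prod.smul_fst, Prod.smul_snd, smul_eq_mul]
  ring_nf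

lemma enorm2_cos_sin (θ : ℝ) : enorm2 (cos θ, sin θ) = 1 := by
  simp [enorm2]

noncomputable def planeArg (v : ℝ × ℝ) : ℝ := Complex.arg ⟨v.1, v.2⟩

lemma cos_planeArg {v : ℝ × ℝ} (hv : v ≠ 0) : cos (planeArg v) = v.1 / enorm2 v := by
  rw [planeArg, Complex.cos_arg, norm_mk_eq_enorm2]
  exact fun h => hv (Prod.ext (congrArg Complex.re h) (congrArg Complex.im h))

lemma sin_planeArg (v : ℝ × ℝ) : sin (planeArg v) = v.2 / enorm2 v := by
  rw [planeArg, Complex.sin_arg, norm_mk_eq_enorm2]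

lemma dot_cos_sin_planeArg (a : ℝ × ℝ) {u : ℝ × ℝ} (hu : u ≠ 0) :
    a.1 * cos (planeArg u) + a.2 * sin (planeArg u) = (a.1 * u.1 + a.2 * u.2) / enorm2 u := by
  rw [cos_planeArg hu, sin_planeArg]
  ring

lemma planeArg_smul_of_pos {t : ℝ} (ht : 0 < t) (v : ℝ × ℝ) : planeArg (t • v) = planeArg v := by
  have hmk : (⟨(t • v).1, (t • v).2⟩ : ℂ) = t * ⟨v.1, v.2⟩ := by apply Complex.ext <;> simp
  rw [planeArg, hmk, Complex.arg_real_mul _ ht, planeArg]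

lemma Function.Periodic.apply_planeArg_neg {α : Type*} {f : ℝ → α} (hf : Periodic f π)
    {v : ℝ × ℝ} (hv : v ≠ 0) : f (planeArg (-v)) = f (planeArg v) := by
  have hnorm : enorm2 (-v) = enorm2 v := by simp [enorm2]
  refine hf.eq_of_cos_eq_neg_of_sin_eq_neg ?_ ?_
  · rw [cos_planeArg (neg_ne_zero.2 hv), cos_planeArg hv, hnorm, Prod.fst_neg, neg_div]
  · rw [sin_planeArg, sin_planeArg, hnorm, Prod.snd_neg, neg_div]

lemma Function.Periodic.apply_planeArg_smul {α : Type*} {f : ℝ → α} (hf : Periodic f π)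
    {t : ℝ} (ht : t ≠ 0) {v : ℝ × ℝ} (hv : v ≠ 0) : f (planeArg (t • v)) = f (planeArg v) := by
  rcases ht.lt_or_gt with ht | ht
  · rw [← neg_neg t, neg_smul, hf.apply_planeArg_neg (smul_ne_zero (by linarith) hv),
      planeArg_smul_of_pos (by linarith)]
  · rw [planeArg_smul_of_pos ht]

noncomputable def homogenize (τ : ℝ → ℝ) (v : ℝ × ℝ) : ℝ := enorm2 v * τ (planeArg v)

lemma homogenize_smul {τ : ℝ → ℝ} (hτ : Periodic τ π) (t : ℝ) (v : ℝ × ℝ) :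
    homogenize τ (t • v) = |t| * homogenize τ v := by
  rcases eq_or_ne t 0 with rfl | ht
  · simp [homogenize, enorm2]
  rcases eq_or_ne v 0 with rfl | hv
  · simp [homogenize, enorm2]
  rw [homogenize, homogenize, enorm2_smul, hτ.apply_planeArg_smul ht hv, mul_assoc]

lemma homogenize_cos_sin {τ : ℝ → ℝ} (hτ : Periodic τ (2 * π)) (θ : ℝ) :
    homogenize τ (cos θ, sin θ) = τ θ := by
  have hθ : ((cos θ, sin θ) : ℝ × ℝ) ≠ 0 := fun h => by
    have h1 := enorm2_cos_sin θ
    rw [h] at h1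
    simp [enorm2] at h1
  rw [homogenize, enorm2_cos_sin, one_mul]
  refine hτ.eq_of_cos_eq_of_sin_eq ?_ ?_
  · rw [cos_planeArg hθ, enorm2_cos_sin, div_one]
  · rw [sin_planeArg, enorm2_cos_sin, div_one]

lemma homogenize_nonneg {τ : ℝ → ℝ} (hτ : ∀ θ, 0 ≤ τ θ) (v : ℝ × ℝ) : 0 ≤ homogenize τ v :=
  mul_nonneg (sqrt_nonneg _) (hτ _)

def cross (u v : ℝ × ℝ) : ℝ := u.1 * v.2 - u.2 * v.1

lemma cross_sub_eq_zero_of_collinear {p q r : ℝ × ℝ} (h : Collinear ℝ {p, q, r}) :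
    cross (q - p) (r - p) = 0 := by
  obtain ⟨d, hd⟩ := (collinear_iff_of_mem (Set.mem_insert p _)).1 h
  obtain ⟨s, hs⟩ := hd q (by simp)
  obtain ⟨t, ht⟩ := hd r (by simp)
  rw [hs, ht, vadd_eq_add, vadd_eq_add, add_sub_cancel_right, add_sub_cancel_right, cross]
  simp only [Prod.smul_fst, Prod.smul_snd, smul_eq_mul]
  ring

lemma exists_eq_smul_of_cross_eq_zero {u v : ℝ × ℝ} (hu : u ≠ 0) (h : cross u v = 0) :
    ∃ t : ℝ, v = t • u := by
  have hu' : u.1 ^ 2 + u.2 ^ 2 ≠ 0 := (sqrt_pos.1 (enorm2_pos hu)).ne'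
  refine ⟨(u.1 * v.1 + u.2 * v.2) / (u.1 ^ 2 + u.2 ^ 2), Prod.ext ?_ ?_⟩
  all_goals
    simp only [Prod.smul_fst, Prod.smul_snd, smul_eq_mul]
    field_simp
    unfold cross at h
  · linear_combination -u.2 * h
  · linear_combination u.1 * h

def WulffTriangleIneq (τ : ℝ → ℝ) : Prop :=
  ∀ (x y z : ℝ × ℝ) (θx θy θz : ℝ),
    ¬ Collinear ℝ ({x, y, z} : Set (ℝ × ℝ)) →
    (y - x).1 * Real.cos θz + (y - x).2 * Real.sin θz = 0 →
    (z - x).1 * Real.cos θz + (z - x).2 * Real.sin θz < 0 →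
    (z - y).1 * Real.cos θx + (z - y).2 * Real.sin θx = 0 →
    (x - y).1 * Real.cos θx + (x - y).2 * Real.sin θx < 0 →
    (x - z).1 * Real.cos θy + (x - z).2 * Real.sin θy = 0 →
    (y - z).1 * Real.cos θy + (y - z).2 * Real.sin θy < 0 →
    enorm2 (x - z) * τ θy ≤ enorm2 (x - y) * τ θz + enorm2 (y - z) * τ θx

section Subadditive

variable {τ : ℝ → ℝ} (hτ : Periodic τ π) (htri : WulffTriangleIneq τ)
include hτ htri

lemma homogenize_add_le_of_cross_pos {u v : ℝ × ℝ} (hc : 0 < cross u v) :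
    homogenize τ (u + v) ≤ homogenize τ u + homogenize τ v := by
  have hu : u ≠ 0 := by rintro rfl; simp [cross] at hc
  have hv : v ≠ 0 := by rintro rfl; simp [cross] at hc
  have huv : u + v ≠ 0 := by
    intro h
    rw [eq_neg_of_add_eq_zero_right h, cross] at hc
    simp only [Prod.fst_neg, Prod.snd_neg] at hc
    linarith
  unfold cross at hc
  have huv' : -(u + v) ≠ 0 := neg_ne_zero.2 huv
  -- The triangle `J (u + v), J v, 0`, with `J` the rotation by `-π/2`, has outward unit normals
  -- `u / ‖u‖`, `v / ‖v‖` and `-(u + v) / ‖u + v‖`.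
  set x : ℝ × ℝ := (u.2 + v.2, -(u.1 + v.1))
  set y : ℝ × ℝ := (v.2, -v.1)
  have H := htri x y 0 (planeArg v) (planeArg (-(u + v)))
    (planeArg u) ?noncollinear ?_ ?_ ?_ ?_ ?_ ?_
  · have hneg : τ (planeArg (-(u + v))) = τ (planeArg (u + v)) := by
      rw [hτ.apply_planeArg_neg huv]
    have hnorm : ∀ a b : ℝ × ℝ, a.1 ^ 2 + a.2 ^ 2 = b.1 ^ 2 + b.2 ^ 2 → enorm2 a = enorm2 b :=
      fun a b h => congrArg sqrt h
    rwa [hnorm (x - 0) (u + v) (by simp [x]; ring), hnorm (x - y) u (by simp [x, y]; ring),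
      hnorm (y - 0) v (by simp [y]; ring), hneg] at H
  case noncollinear =>
    intro hcol
    have := cross_sub_eq_zero_of_collinear hcol
    simp only [cross, Prod.fst_sub, Prod.snd_sub, Prod.fst_zero, Prod.snd_zero] at this
    linarith
  · rw [dot_cos_sin_planeArg _ hu, div_eq_zero_iff]
    exact .inl (by simp [x, y]; ring)
  · rw [dot_cos_sin_planeArg _ hu]
    exact div_neg_of_neg_of_pos (by simp [x]; linarith) (enorm2_pos hu)
  · rw [dot_cos_sin_planeArg _ hv, div_eq_zero_iff]
    exact .inl (by simp [y]; ring)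
  · rw [dot_cos_sin_planeArg _ hv]
    exact div_neg_of_neg_of_pos (by simp [x, y]; linarith) (enorm2_pos hv)
  · rw [dot_cos_sin_planeArg _ huv', div_eq_zero_iff]
    exact .inl (by simp [x]; ring)
  · rw [dot_cos_sin_planeArg _ huv']
    exact div_neg_of_neg_of_pos (by simp [y]; linarith) (enorm2_pos huv')

lemma homogenize_add_le (hτ₀ : ∀ θ, 0 ≤ τ θ) (u v : ℝ × ℝ) :
    homogenize τ (u + v) ≤ homogenize τ u + homogenize τ v := by
  rcases lt_trichotomy (cross u v) 0 with hc | hc | hc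
  · rw [add_comm u, add_comm (homogenize τ u)]
    exact homogenize_add_le_of_cross_pos hτ htri (by unfold cross at hc ⊢; linarith)
  · rcases eq_or_ne u 0 with rfl | hu
    · simp [homogenize, enorm2]
    obtain ⟨t, rfl⟩ := exists_eq_smul_of_cross_eq_zero hu hc
    calc homogenize τ (u + t • u) = |1 + t| * homogenize τ u := by
          rw [← homogenize_smul hτ, add_smul, one_smul]
      _ ≤ (1 + |t|) * homogenize τ u := by
          gcongr
          · exact homogenize_nonneg hτ₀ u
          · simpa using abs_add_le 1 t
      _ = homogenize τ u + homogenize τ (t • u) := by rw [homogenize_smul hτ]; ring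
  · exact homogenize_add_le_of_cross_pos hτ htri hc

end Subadditive

theorem wulff_support_function_general (τ : ℝ → ℝ)
    (hpos : ∀ θ : ℝ, 0 < τ θ) (hper : ∀ θ : ℝ, τ (θ + Real.pi) = τ θ)
    (htri : ∀ (x y z : ℝ × ℝ) (θx θy θz : ℝ),
      ¬ Collinear ℝ ({x, y, z} : Set (ℝ × ℝ)) →
      -- `n_z = (cos θz, sin θz)` is the outward unit normal to the side `[x, y]`
      (y - x).1 * Real.cos θz + (y - x).2 * Real.sin θz = 0 →
      (z - x).1 * Real.cos θz + (z - x).2 * Real.sin θz < 0 →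
      -- `n_x = (cos θx, sin θx)` is the outward unit normal to the side `[y, z]`
      (z - y).1 * Real.cos θx + (z - y).2 * Real.sin θx = 0 →
      (x - y).1 * Real.cos θx + (x - y).2 * Real.sin θx < 0 →
      -- `n_y = (cos θy, sin θy)` is the outward unit normal to the side `[z, x]`
      (x - z).1 * Real.cos θy + (x - z).2 * Real.sin θy = 0 →
      (y - z).1 * Real.cos θy + (y - z).2 * Real.sin θy < 0 →
      enorm2 (x - z) * τ θy ≤ enorm2 (x - y) * τ θz + enorm2 (y - z) * τ θx)
    (ρ : ℝ) (hρ : 0 < ρ) (θ : ℝ) :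
    IsGreatest ((fun x : ℝ × ℝ => x.1 * Real.cos θ + x.2 * Real.sin θ) '' wulff τ ρ)
      (ρ * τ θ) := by
  refine ⟨?_, fun _ ⟨x, hx, hxθ⟩ => hxθ ▸ hx θ⟩
  have hper₂ : Periodic τ (2 * π) := two_mul π ▸ Periodic.add_period hper hper
  obtain ⟨g, hgN, hgθ⟩ := exists_linearMap_le_eq_of_sublinear (fun u => ρ * homogenize τ u)
    (fun c hc u => by simp only [homogenize_smul hper, abs_of_pos hc]; ring)
    (fun u v => (mul_le_mul_of_nonneg_left
      (homogenize_add_le hper htri (fun θ => (hpos θ).le) u v) hρ.le).trans_eq (mul_add _ _ _))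
    (cos θ, sin θ)
  refine ⟨(g (1, 0), g (0, 1)), fun θ' => ?_, ?_⟩
  · calc g (1, 0) * cos θ' + g (0, 1) * sin θ' = g (cos θ', sin θ') :=
          g.prod_apply_eq (cos θ', sin θ')
      _ ≤ ρ * homogenize τ (cos θ', sin θ') := hgN _
      _ = ρ * τ θ' := by rw [homogenize_cos_sin hper₂]
  · calc g (1, 0) * cos θ + g (0, 1) * sin θ = g (cos θ, sin θ) := g.prod_apply_eq (cos θ, sin θ)
      _ = ρ * τ θ := by rw [hgθ, homogenize_cos_sin hper₂]

/-- If the surface tension `τ` is continuous, positive, `π`-periodic and satisfies the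
triangle inequality (for any nondegenerate triangle `xyz` with outward unit normals
`n_z = (cos θ_z, sin θ_z)`, `n_x`, `n_y` to the sides `[x,y]`, `[y,z]`, `[z,x]`, one has
`‖x−z‖·τ(θ_y) ≤ ‖x−y‖·τ(θ_z) + ‖y−z‖·τ(θ_x)`), then `ρτ` is the support function of the
Wulff shape `W_ρ`: for every direction `θ`, the maximum over `W_ρ` of
`x ↦ x • (cos θ, sin θ)` is attained and equals `ρ·τ(θ)`. -/
theorem wulff_support_function (τ : ℝ → ℝ) (hcont : Continuous τ)
    (hpos : ∀ θ : ℝ, 0 < τ θ) (hper : ∀ θ : ℝ, τ (θ + Real.pi) = τ θ)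
    (htri : ∀ (x y z : ℝ × ℝ) (θx θy θz : ℝ),
      ¬ Collinear ℝ ({x, y, z} : Set (ℝ × ℝ)) →
      -- `n_z = (cos θz, sin θz)` is the outward unit normal to the side `[x, y]`
      (y - x).1 * Real.cos θz + (y - x).2 * Real.sin θz = 0 →
      (z - x).1 * Real.cos θz + (z - x).2 * Real.sin θz < 0 →
      -- `n_x = (cos θx, sin θx)` is the outward unit normal to the side `[y, z]`
      (z - y).1 * Real.cos θx + (z - y).2 * Real.sin θx = 0 →
      (x - y).1 * Real.cos θx + (x - y).2 * Real.sin θx < 0 →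
      -- `n_y = (cos θy, sin θy)` is the outward unit normal to the side `[z, x]`
      (x - z).1 * Real.cos θy + (x - z).2 * Real.sin θy = 0 →
      (y - z).1 * Real.cos θy + (y - z).2 * Real.sin θy < 0 →
      enorm2 (x - z) * τ θy ≤ enorm2 (x - y) * τ θz + enorm2 (y - z) * τ θx)
    (ρ : ℝ) (hρ : 0 < ρ) (θ : ℝ) :
    IsGreatest ((fun x : ℝ × ℝ => x.1 * Real.cos θ + x.2 * Real.sin θ) '' wulff τ ρ)
      (ρ * τ θ) :=
  wulff_support_function_general τ hpos hper htri ρ hρ θ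
end
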